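/- arXiv:2306.13998 — 2 statements merged into one kernel-verified Lean document; each statement's English description precedes it below -/
import Mathlib

section
/- Let γ > 0. There exist constants M(γ) > 0 and ρ(γ) > 0, independent of λ, such that for every λ ≥ γ² the solution (u, v) of the system u' = v, v' = -λ u - 2γ v satisfies |u(t)|² + λ⁻¹ |v(t)|² ≤ M(γ)² e^{-2ρ(γ) t} ( |u(0)|² + λ⁻¹ |v(0)|² ) for all t ≥ 0. -/
/-!
The quadratic form `L = λu² + v² + γuv` is equivalent to the energy `λu² + v²` as soon as
`γ² ≤ λ`, with constants `1/2` and `3/2` independent of `λ`. Along solutions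
`L' = -γ(λu² + 3v² + 2γuv) ≤ -(γ/2) L`, so Grönwall gives `L(t) ≤ e^{-γt/2} L(0)`, hence the
energy decays at rate `γ/2` with constant `3`; dividing by `λ` gives the weighted energy bound.
-/

open Real Set

theorem le_mul_exp_of_hasDerivWithinAt_le_mul {f f' : ℝ → ℝ} {K a t : ℝ}
    (hf : ∀ s ∈ Ici a, HasDerivWithinAt f (f' s) (Ici a) s)
    (hbound : ∀ s ∈ Ici a, f' s ≤ K * f s) (ht : a ≤ t) :
    f t ≤ f a * exp (K * (t - a)) := by
  have := le_gronwallBound_of_liminf_deriv_right_le (ε := 0) (b := t)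
    (fun s hs => (hf s hs.1).continuousWithinAt.mono Icc_subset_Ici_self)
    (fun s hs _ hr => ((hf s hs.1).mono (Ici_subset_Ici.2 hs.1)).liminf_right_slope_le hr)
    le_rfl (fun s hs => by simpa using hbound s hs.1) t ⟨ht, le_rfl⟩
  rwa [gronwallBound_ε0] at this

namespace DampedOscillator

def lyapunov (γ lam u v : ℝ) : ℝ := lam * u ^ 2 + v ^ 2 + γ * (u * v)

variable {γ lam : ℝ}

theorem half_energy_le_lyapunov (hlam : γ ^ 2 ≤ lam) (u v : ℝ) :
    (lam * u ^ 2 + v ^ 2) / 2 ≤ lyapunov γ lam u v := by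
  unfold lyapunov
  nlinarith [sq_nonneg (γ * u + v), mul_nonneg (sub_nonneg.2 hlam) (sq_nonneg u)]

theorem lyapunov_le_three_halves_energy (hlam : γ ^ 2 ≤ lam) (u v : ℝ) :
    lyapunov γ lam u v ≤ 3 / 2 * (lam * u ^ 2 + v ^ 2) := by
  unfold lyapunov
  nlinarith [sq_nonneg (γ * u - v), mul_nonneg (sub_nonneg.2 hlam) (sq_nonneg u)]

theorem hasDerivWithinAt_lyapunov {u v : ℝ → ℝ} {s : Set ℝ} {t : ℝ}
    (hu : HasDerivWithinAt u (v t) s t)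
    (hv : HasDerivWithinAt v (-lam * u t - 2 * γ * v t) s t) :
    HasDerivWithinAt (fun r => lyapunov γ lam (u r) (v r))
      (-γ * (lam * u t ^ 2 + 3 * v t ^ 2 + 2 * γ * (u t * v t))) s t := by
  unfold lyapunov
  exact ((((hu.fun_pow 2).const_mul lam).add (hv.fun_pow 2)).add
    ((hu.fun_mul hv).const_mul γ)).congr_deriv (by ring)

theorem lyapunov_dissipation_le (hγ : 0 < γ) (hlam : γ ^ 2 ≤ lam) (u v : ℝ) :
    -γ * (lam * u ^ 2 + 3 * v ^ 2 + 2 * γ * (u * v)) ≤ -(γ / 2) * lyapunov γ lam u v := by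
  have : 0 ≤ lam * u ^ 2 + 5 * v ^ 2 + 3 * γ * (u * v) := by
    nlinarith [sq_nonneg (2 * γ * u + 3 * v), mul_nonneg (sub_nonneg.2 hlam) (sq_nonneg u)]
  unfold lyapunov
  nlinarith [mul_nonneg hγ.le this]

theorem energy_le_three_mul_exp (hγ : 0 < γ) (hlam : γ ^ 2 ≤ lam) {u v : ℝ → ℝ}
    (hu : ∀ t ∈ Ici (0 : ℝ), HasDerivWithinAt u (v t) (Ici 0) t)
    (hv : ∀ t ∈ Ici (0 : ℝ), HasDerivWithinAt v (-lam * u t - 2 * γ * v t) (Ici 0) t)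
    {t : ℝ} (ht : 0 ≤ t) :
    lam * u t ^ 2 + v t ^ 2 ≤ 3 * exp (-(γ / 2) * t) * (lam * u 0 ^ 2 + v 0 ^ 2) := by
  have hdecay : lyapunov γ lam (u t) (v t) ≤ lyapunov γ lam (u 0) (v 0) * exp (-(γ / 2) * t) := by
    simpa using le_mul_exp_of_hasDerivWithinAt_le_mul
      (fun s hs => hasDerivWithinAt_lyapunov (hu s hs) (hv s hs))
      (fun s _ => lyapunov_dissipation_le hγ hlam (u s) (v s)) ht
  have hexp := (exp_pos (-(γ / 2) * t)).le
  calc lam * u t ^ 2 + v t ^ 2 ≤ 2 * lyapunov γ lam (u t) (v t) := by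
        linarith [half_energy_le_lyapunov hlam (u t) (v t)]
    _ ≤ 2 * (lyapunov γ lam (u 0) (v 0) * exp (-(γ / 2) * t)) := by gcongr
    _ ≤ 2 * (3 / 2 * (lam * u 0 ^ 2 + v 0 ^ 2) * exp (-(γ / 2) * t)) := by
        gcongr; exact lyapunov_le_three_halves_energy hlam (u 0) (v 0)
    _ = 3 * exp (-(γ / 2) * t) * (lam * u 0 ^ 2 + v 0 ^ 2) := by ring

end DampedOscillator

/-- Uniform exponential decay of the weighted energy, uniformly over `λ ≥ γ²`. -/
theorem stmt_7 (γ : ℝ) (hγ : 0 < γ) :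
    ∃ M > (0:ℝ), ∃ ρ > (0:ℝ),
      ∀ lam : ℝ, γ ^ 2 ≤ lam →
      ∀ u v : ℝ → ℝ,
        (∀ t ∈ Set.Ici (0:ℝ), HasDerivWithinAt u (v t) (Set.Ici 0) t) →
        (∀ t ∈ Set.Ici (0:ℝ),
          HasDerivWithinAt v (-lam * u t - 2 * γ * v t) (Set.Ici 0) t) →
        ∀ t ≥ (0:ℝ),
          (u t) ^ 2 + lam⁻¹ * (v t) ^ 2
            ≤ M ^ 2 * Real.exp (-2 * ρ * t) * ((u 0) ^ 2 + lam⁻¹ * (v 0) ^ 2) := by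
  refine ⟨2, two_pos, γ / 4, by positivity, fun lam hlam u v hu hv t ht => ?_⟩
  have hlam0 : 0 < lam := (pow_pos hγ 2).trans_le hlam
  have henergy := DampedOscillator.energy_le_three_mul_exp hγ hlam hu hv ht
  have hE0 : 0 ≤ exp (-(γ / 2) * t) * (lam * u 0 ^ 2 + v 0 ^ 2) := by positivity
  rw [show -2 * (γ / 4) * t = -(γ / 2) * t by ring]
  calc u t ^ 2 + lam⁻¹ * v t ^ 2 = (lam * u t ^ 2 + v t ^ 2) / lam := by field_simp
    _ ≤ 2 ^ 2 * exp (-(γ / 2) * t) * (lam * u 0 ^ 2 + v 0 ^ 2) / lam := by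
        gcongr; linarith
    _ = 2 ^ 2 * exp (-(γ / 2) * t) * (u 0 ^ 2 + lam⁻¹ * v 0 ^ 2) := by field_simp
end

section
/- Let ρ > 0, a ≥ 0, b ≥ 0 with b < ρ, τ ∈ (0,1), M ≥ 1, and let (rₘ)ₘ≥0 be a sequence of nonnegative reals satisfying rₘ ≤ M e^{-ρ m τ} r₀ + a + b τ Σ_{ℓ=0}^{m-1} e^{-ρ (m-ℓ) τ} r_ℓ for all m ≥ 0. Then sup_{m≥0} rₘ ≤ C (r₀ + a) for a constant C depending only on ρ, b, M (and not on τ or m). -/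
/-- Discrete Gronwall lemma with exponentially decaying kernel: a nonnegative sequence
satisfying `rₘ ≤ M e^{-ρmτ} r₀ + a + bτ Σ_{ℓ<m} e^{-ρ(m-ℓ)τ} r_ℓ` with `b < ρ` is bounded
by `C (r₀ + a)` with `C` depending only on `ρ`, `b`, `M` (not on `τ ∈ (0,1)` or `m`). -/
theorem stmt_15 (ρ b M : ℝ) (hρ : 0 < ρ) (hb : 0 ≤ b) (hbρ : b < ρ) (hM : 1 ≤ M) :
    ∃ C > (0:ℝ),
      ∀ a : ℝ, 0 ≤ a →
      ∀ τ : ℝ, τ ∈ Set.Ioo (0:ℝ) 1 →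
      ∀ r : ℕ → ℝ, (∀ m, 0 ≤ r m) →
        (∀ m : ℕ,
          r m ≤ M * Real.exp (-ρ * m * τ) * r 0 + a
            + b * τ * ∑ ℓ ∈ Finset.range m, Real.exp (-ρ * ((m : ℝ) - ℓ) * τ) * r ℓ) →
        ∀ m : ℕ, r m ≤ C * (r 0 + a) := by
  have hρb : 0 < ρ - b := by linarith
  refine ⟨M * ρ / (ρ - b), by positivity, ?_⟩
  set C := M * ρ / (ρ - b) with hCdef
  have hCM : M ≤ C := by
    rw [hCdef, le_div_iff₀ hρb]; nlinarith
  have hC0 : 0 < C := by positivity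
  have hCeq : M + b / ρ * C = C := by
    rw [hCdef]; field_simp; ring
  intro a ha τ hτ r hr hrec m
  obtain ⟨hτ0, hτ1⟩ := hτ
  set x := Real.exp (-ρ * τ) with hxdef
  have hx0 : 0 < x := Real.exp_pos _
  have hx1 : x < 1 := by
    rw [hxdef]; apply Real.exp_lt_one_iff.2; nlinarith
  -- key kernel bound: τ * x / (1 - x) ≤ 1/ρ, i.e. ρ * τ * x ≤ 1 - x
  have hkey : ρ * τ * x ≤ 1 - x := by
    have h := Real.add_one_le_exp (ρ * τ)
    have hinv : x * Real.exp (ρ * τ) = 1 := by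
      rw [hxdef, ← Real.exp_add]; ring_nf; exact Real.exp_zero
    nlinarith [hx0]
  have hK0 : 0 ≤ r 0 + a := add_nonneg (hr 0) ha
  induction m using Nat.strong_induction_on with
  | _ m ih =>
    have hterm : ∀ ℓ ∈ Finset.range m,
        Real.exp (-ρ * ((m : ℝ) - ℓ) * τ) * r ℓ ≤ x ^ (m - ℓ) * (C * (r 0 + a)) := by
      intro ℓ hℓ
      have hℓm : ℓ < m := Finset.mem_range.1 hℓ
      have hcast : ((m : ℝ) - ℓ) = ((m - ℓ : ℕ) : ℝ) := by
        push_cast [Nat.cast_sub hℓm.le]; ring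
      have hexp : Real.exp (-ρ * ((m : ℝ) - ℓ) * τ) = x ^ (m - ℓ) := by
        rw [hcast, hxdef, ← Real.exp_nat_mul]; ring_nf
      rw [hexp]
      exact mul_le_mul_of_nonneg_left (ih ℓ hℓm) (by positivity)
    have hsum1 : ∑ ℓ ∈ Finset.range m, Real.exp (-ρ * ((m : ℝ) - ℓ) * τ) * r ℓ
        ≤ (∑ ℓ ∈ Finset.range m, x ^ (m - ℓ)) * (C * (r 0 + a)) := by
      rw [Finset.sum_mul]
      exact Finset.sum_le_sum hterm
    have hreflect : ∑ ℓ ∈ Finset.range m, x ^ (m - ℓ)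
        = ∑ ℓ ∈ Finset.range m, x ^ (ℓ + 1) := by
      rw [← Finset.sum_range_reflect (fun ℓ => x ^ (ℓ + 1)) m]
      apply Finset.sum_congr rfl
      intro ℓ hℓ
      have hℓm : ℓ < m := Finset.mem_range.1 hℓ
      congr 1
      omega
    have h1x : 0 < (1:ℝ) - x := by linarith
    have hgeom : ∑ ℓ ∈ Finset.range m, x ^ ℓ ≤ 1 / (1 - x) := by
      rw [geom_sum_eq (ne_of_lt hx1) m]
      have heq : (x ^ m - 1) / (x - 1) = (1 - x ^ m) / (1 - x) := by
        rw [← neg_div_neg_eq]; ring_nf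
      rw [heq, div_le_div_iff₀ h1x h1x]
      nlinarith [pow_nonneg hx0.le m]
    have hsum2 : ∑ ℓ ∈ Finset.range m, x ^ (m - ℓ) ≤ x / (1 - x) := by
      rw [hreflect]
      have : ∑ ℓ ∈ Finset.range m, x ^ (ℓ + 1) = x * ∑ ℓ ∈ Finset.range m, x ^ ℓ := by
        rw [Finset.mul_sum]
        exact Finset.sum_congr rfl fun ℓ _ => by ring
      rw [this, div_eq_mul_inv, ← one_div]
      exact mul_le_mul_of_nonneg_left hgeom hx0.le
    have hτsum : τ * ∑ ℓ ∈ Finset.range m, x ^ (m - ℓ) ≤ 1 / ρ := by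
      have h1 : τ * (x / (1 - x)) ≤ 1 / ρ := by
        have heq : τ * (x / (1 - x)) = (τ * x) / (1 - x) := by ring
        rw [heq, div_le_div_iff₀ h1x hρ]
        nlinarith
      calc τ * ∑ ℓ ∈ Finset.range m, x ^ (m - ℓ) ≤ τ * (x / (1 - x)) :=
            mul_le_mul_of_nonneg_left hsum2 hτ0.le
        _ ≤ 1 / ρ := h1
    have hSnn : 0 ≤ ∑ ℓ ∈ Finset.range m, x ^ (m - ℓ) :=
      Finset.sum_nonneg fun ℓ _ => pow_nonneg hx0.le _
    have hmain : b * τ * ∑ ℓ ∈ Finset.range m, Real.exp (-ρ * ((m : ℝ) - ℓ) * τ) * r ℓ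
        ≤ b / ρ * (C * (r 0 + a)) := by
      calc b * τ * ∑ ℓ ∈ Finset.range m, Real.exp (-ρ * ((m : ℝ) - ℓ) * τ) * r ℓ
          ≤ b * τ * ((∑ ℓ ∈ Finset.range m, x ^ (m - ℓ)) * (C * (r 0 + a))) := by
            apply mul_le_mul_of_nonneg_left hsum1 (by positivity)
        _ = b * (τ * ∑ ℓ ∈ Finset.range m, x ^ (m - ℓ)) * (C * (r 0 + a)) := by ring
        _ ≤ b * (1 / ρ) * (C * (r 0 + a)) := by
            apply mul_le_mul_of_nonneg_right _ (by positivity)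
            exact mul_le_mul_of_nonneg_left hτsum hb
        _ = b / ρ * (C * (r 0 + a)) := by ring
    have hexp1 : Real.exp (-ρ * m * τ) ≤ 1 := by
      apply Real.exp_le_one_iff.2
      have hm : (0:ℝ) ≤ (m:ℝ) := Nat.cast_nonneg m
      have := mul_nonneg (mul_nonneg hρ.le hm) hτ0.le
      linarith
    have h0 : 0 ≤ r 0 := hr 0
    calc r m ≤ M * Real.exp (-ρ * m * τ) * r 0 + a
          + b * τ * ∑ ℓ ∈ Finset.range m, Real.exp (-ρ * ((m : ℝ) - ℓ) * τ) * r ℓ := hrec m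
      _ ≤ M * r 0 + a + b / ρ * (C * (r 0 + a)) := by
          have hMe : M * Real.exp (-ρ * m * τ) ≤ M := by nlinarith
          have := mul_le_mul_of_nonneg_right hMe h0
          linarith
      _ ≤ C * (r 0 + a) := by nlinarith
end
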